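/- arXiv:1707.05609 — 2 statements merged into one kernel-verified Lean document; each statement's English description precedes it below -/
import Mathlib

section
/- Let γ > 0, let X be a real n×d matrix and y ∈ ℝⁿ. If ᾱ ∈ ℝⁿ minimizes the dual ridge objective Λ(α) = (1/2)‖Xᵀα‖₂² + (1/(2γ))‖α‖₂² − ⟨y, α⟩, then w̄ = Xᵀᾱ is the unique minimizer of the primal ridge objective F(w) = (γ/2)‖Xw − y‖₂² + (1/2)‖w‖₂². -/
/-!
Minimality of `ᾱ` along every line `ᾱ + t v` kills the linear term in `t`, which is the
stationarity condition `X Xᵀ ᾱ + γ⁻¹ ᾱ = y`, i.e. `γ (X w̄ - y) = -ᾱ` for `w̄ = Xᵀ ᾱ`. This makes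
the cross term `⟨γ Xᵀ (X w̄ - y) + w̄, h⟩` in the expansion of `F (w̄ + h)` vanish, so
`F (w̄ + h) = F w̄ + (γ/2) ‖X h‖² + ½ ‖h‖² ≥ F w̄ + ½ ‖h‖²`.
-/

open Matrix

theorem dotProduct_self_nonneg {n R : Type*} [Fintype n] [Ring R] [LinearOrder R]
    [IsStrictOrderedRing R] (v : n → R) : 0 ≤ v ⬝ᵥ v :=
  Fintype.sum_nonneg fun i => mul_self_nonneg (v i)

theorem eq_zero_of_forall_nonneg_mul_sq_add_mul {a b : ℝ} (h : ∀ t : ℝ, 0 ≤ a * t ^ 2 + b * t) :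
    b = 0 := by
  have hdiscrim := discrim_le_zero (K := ℝ) (c := 0) fun t => by simpa [sq] using h t
  rw [discrim] at hdiscrim
  nlinarith [sq_nonneg b]

section Ridge

variable {m k : Type*} [Fintype m] [Fintype k]

noncomputable def ridgePrimal (γ : ℝ) (X : Matrix m k ℝ) (y : m → ℝ) (w : k → ℝ) : ℝ :=
  γ / 2 * ((X *ᵥ w - y) ⬝ᵥ (X *ᵥ w - y)) + 1 / 2 * (w ⬝ᵥ w)

noncomputable def ridgeDual (γ : ℝ) (X : Matrix m k ℝ) (y : m → ℝ) (α : m → ℝ) : ℝ :=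
  1 / 2 * ((Xᵀ *ᵥ α) ⬝ᵥ (Xᵀ *ᵥ α)) + 1 / (2 * γ) * (α ⬝ᵥ α) - y ⬝ᵥ α

noncomputable def ridgeDualGrad (γ : ℝ) (X : Matrix m k ℝ) (y : m → ℝ) (α : m → ℝ) : m → ℝ :=
  X *ᵥ (Xᵀ *ᵥ α) + γ⁻¹ • α - y

theorem ridgeDual_add_smul (γ : ℝ) (X : Matrix m k ℝ) (y α v : m → ℝ) (t : ℝ) :
    ridgeDual γ X y (α + t • v) = ridgeDual γ X y α
      + (1 / 2 * ((Xᵀ *ᵥ v) ⬝ᵥ (Xᵀ *ᵥ v)) + 1 / (2 * γ) * (v ⬝ᵥ v)) * t ^ 2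
      + (ridgeDualGrad γ X y α ⬝ᵥ v) * t := by
  have hcross : (Xᵀ *ᵥ α) ⬝ᵥ (Xᵀ *ᵥ v) = (X *ᵥ (Xᵀ *ᵥ α)) ⬝ᵥ v := by
    rw [dotProduct_comm, mulVec_transpose, ← dotProduct_mulVec, dotProduct_comm]
  simp only [ridgeDual, ridgeDualGrad, mulVec_add, mulVec_smul, add_dotProduct, dotProduct_add,
    smul_dotProduct, dotProduct_smul, sub_dotProduct, smul_eq_mul, dotProduct_comm v α,
    dotProduct_comm (Xᵀ *ᵥ v) (Xᵀ *ᵥ α), hcross]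
  ring

theorem ridgeDualGrad_eq_zero_of_forall_le {γ : ℝ} {X : Matrix m k ℝ} {y ᾱ : m → ℝ}
    (hmin : ∀ α, ridgeDual γ X y ᾱ ≤ ridgeDual γ X y α) : ridgeDualGrad γ X y ᾱ = 0 := by
  set g := ridgeDualGrad γ X y ᾱ
  refine dotProduct_self_eq_zero.mp (eq_zero_of_forall_nonneg_mul_sq_add_mul
    (a := 1 / 2 * ((Xᵀ *ᵥ g) ⬝ᵥ (Xᵀ *ᵥ g)) + 1 / (2 * γ) * (g ⬝ᵥ g)) fun t => ?_)
  have hline := hmin (ᾱ + t • g)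
  rw [ridgeDual_add_smul] at hline
  linarith

theorem ridgePrimal_add (γ : ℝ) (X : Matrix m k ℝ) (y : m → ℝ) (w h : k → ℝ) :
    ridgePrimal γ X y (w + h) = ridgePrimal γ X y w
      + ((γ • (X *ᵥ w - y)) ᵥ* X + w) ⬝ᵥ h
      + (γ / 2 * ((X *ᵥ h) ⬝ᵥ (X *ᵥ h)) + 1 / 2 * (h ⬝ᵥ h)) := by
  have hcross : (X *ᵥ w - y) ⬝ᵥ (X *ᵥ h) = ((X *ᵥ w - y) ᵥ* X) ⬝ᵥ h := dotProduct_mulVec _ _ _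
  simp only [ridgePrimal, mulVec_add, add_sub_right_comm, add_dotProduct, dotProduct_add,
    smul_vecMul, smul_dotProduct, smul_eq_mul, dotProduct_comm h w,
    dotProduct_comm (X *ᵥ h) (X *ᵥ w - y), hcross]
  ring

theorem ridgePrimal_transpose_mulVec_add {γ : ℝ} (hγ : γ ≠ 0) {X : Matrix m k ℝ} {y ᾱ : m → ℝ}
    (hᾱ : ridgeDualGrad γ X y ᾱ = 0) (h : k → ℝ) :
    ridgePrimal γ X y (Xᵀ *ᵥ ᾱ + h) = ridgePrimal γ X y (Xᵀ *ᵥ ᾱ)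
      + (γ / 2 * ((X *ᵥ h) ⬝ᵥ (X *ᵥ h)) + 1 / 2 * (h ⬝ᵥ h)) := by
  have hres : X *ᵥ (Xᵀ *ᵥ ᾱ) - y = -(γ⁻¹ • ᾱ) := by
    rw [eq_neg_iff_add_eq_zero, sub_add_eq_add_sub]
    exact hᾱ
  rw [ridgePrimal_add, hres, smul_neg, smul_smul, mul_inv_cancel₀ hγ, one_smul, neg_vecMul,
    ← mulVec_transpose, neg_add_cancel, zero_dotProduct, add_zero]

theorem ridgePrimal_transpose_mulVec_add_le {γ : ℝ} (hγ : 0 < γ) {X : Matrix m k ℝ}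
    {y ᾱ : m → ℝ} (hᾱ : ridgeDualGrad γ X y ᾱ = 0) (w : k → ℝ) :
    ridgePrimal γ X y (Xᵀ *ᵥ ᾱ) + 1 / 2 * ((w - Xᵀ *ᵥ ᾱ) ⬝ᵥ (w - Xᵀ *ᵥ ᾱ))
      ≤ ridgePrimal γ X y w := by
  have hexp := ridgePrimal_transpose_mulVec_add hγ.ne' hᾱ (w - Xᵀ *ᵥ ᾱ)
  rw [add_sub_cancel] at hexp
  have hX : 0 ≤ γ / 2 * ((X *ᵥ (w - Xᵀ *ᵥ ᾱ)) ⬝ᵥ (X *ᵥ (w - Xᵀ *ᵥ ᾱ))) :=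
    mul_nonneg (by positivity) (dotProduct_self_nonneg _)
  linarith

end Ridge

/-- If `ᾱ` minimizes the dual ridge objective
`Λ(α) = (1/2)‖Xᵀα‖₂² + (1/(2γ))‖α‖₂² − ⟨y, α⟩`, then `w̄ = Xᵀᾱ` is the
unique minimizer of the primal ridge objective
`F(w) = (γ/2)‖Xw − y‖₂² + (1/2)‖w‖₂²`. -/
theorem ridge_dual_to_primal (n d : ℕ) (γ : ℝ) (hγ : 0 < γ)
    (X : Matrix (Fin n) (Fin d) ℝ) (y : Fin n → ℝ)
    (F : (Fin d → ℝ) → ℝ)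
    (hF : ∀ w, F w = γ / 2 * ∑ i, (X.mulVec w i - y i) ^ 2 + 1 / 2 * ∑ j, w j ^ 2)
    (Λ : (Fin n → ℝ) → ℝ)
    (hΛ : ∀ α, Λ α = 1 / 2 * ∑ j, (X.transpose.mulVec α j) ^ 2
        + 1 / (2 * γ) * ∑ i, α i ^ 2 - ∑ i, y i * α i)
    (ᾱ : Fin n → ℝ) (hᾱ : ∀ α, Λ ᾱ ≤ Λ α) :
    (∀ w, F (X.transpose.mulVec ᾱ) ≤ F w) ∧
      ∀ w, (∀ v, F w ≤ F v) → w = X.transpose.mulVec ᾱ := by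
  obtain rfl : F = ridgePrimal γ X y := funext fun w => by
    simp only [hF, ridgePrimal, dotProduct, Pi.sub_apply, sq]
  obtain rfl : Λ = ridgeDual γ X y := funext fun α => by
    simp only [hΛ, ridgeDual, dotProduct, sq]
  have hgrowth := ridgePrimal_transpose_mulVec_add_le hγ (ridgeDualGrad_eq_zero_of_forall_le hᾱ)
  refine ⟨fun w => by linarith [hgrowth w, dotProduct_self_nonneg (w - Xᵀ *ᵥ ᾱ)], fun w hw => ?_⟩
  have hzero : (w - Xᵀ *ᵥ ᾱ) ⬝ᵥ (w - Xᵀ *ᵥ ᾱ) = 0 :=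
    le_antisymm (by linarith [hgrowth w, hw (Xᵀ *ᵥ ᾱ)]) (dotProduct_self_nonneg _)
  exact sub_eq_zero.mp (dotProduct_self_eq_zero.mp hzero)
end

section
/- Let 1 < p < 2 with conjugate exponent q (1/p + 1/q = 1), γ > 0, let X be a real n×d matrix and y ∈ ℝⁿ. If ᾱ ∈ ℝⁿ minimizes the dual objective Λ(α) = (1/q)‖Xᵀα‖_q^q + (1/(2γ))‖α‖₂² − ⟨y, α⟩, then w̄ = J_q(Xᵀᾱ) is the unique minimizer of the primal objective F(w) = (γ/2)‖Xw − y‖₂² + (1/p)‖w‖_p^p. -/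
/-!
At a minimiser of the dual, the first-order condition reads `X J_q(Xᵀᾱ) - y + ᾱ/γ = 0`.
Since `J_p` and `J_q` are mutually inverse for conjugate exponents, `w̄ = J_q(Xᵀᾱ)` satisfies
`J_p(w̄) = Xᵀᾱ = -γ Xᵀ(Xw̄ - y)`: the primal gradient vanishes at `w̄`. As `J_p` is the
derivative of the strictly convex function `|t|^p / p`, for `w ≠ w̄` the gap `F w - F w̄` splits
as `(γ/2)‖X(w - w̄)‖²` plus a sum of nonnegative Bregman divergences of `|t|^p / p`, at least one
of them positive.
-/

open Matrix Set

noncomputable def dualityMap (r t : ℝ) : ℝ := Real.sign t * |t| ^ (r - 1)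

lemma dualityMap_eq_abs_rpow_mul (r t : ℝ) : dualityMap r t = |t| ^ (r - 2) * t := by
  rcases lt_trichotomy t 0 with ht | rfl | ht
  · rw [dualityMap, Real.sign_of_neg ht, show r - 1 = r - 2 + 1 by ring,
      Real.rpow_add_one (abs_ne_zero.2 ht.ne), abs_of_neg ht]
    ring
  · simp [dualityMap]
  · rw [dualityMap, Real.sign_of_pos ht, show r - 1 = r - 2 + 1 by ring,
      Real.rpow_add_one (abs_ne_zero.2 ht.ne'), abs_of_pos ht]
    ring

lemma dualityMap_neg (r t : ℝ) : dualityMap r (-t) = -dualityMap r t := by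
  simp [dualityMap, Real.sign_neg]

lemma dualityMap_of_nonneg {r t : ℝ} (hr : 1 < r) (ht : 0 ≤ t) : dualityMap r t = t ^ (r - 1) := by
  rcases ht.eq_or_lt with rfl | ht
  · simp [dualityMap, Real.zero_rpow (by linarith : r - 1 ≠ 0)]
  · rw [dualityMap, Real.sign_of_pos ht, abs_of_pos ht, one_mul]

lemma dualityMap_strictMono {r : ℝ} (hr : 1 < r) : StrictMono (dualityMap r) :=
  strictMono_of_odd_strictMonoOn_nonneg (dualityMap_neg r) <|
    (Real.strictMonoOn_rpow_Ici_of_exponent_pos (by linarith)).congr fun _ ht =>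
      (dualityMap_of_nonneg hr ht).symm

lemma dualityMap_dualityMap {p q : ℝ} (hpq : p.HolderConjugate q) (t : ℝ) :
    dualityMap p (dualityMap q t) = t := by
  have hexp : (q - 1) * (p - 1) = 1 := by linear_combination hpq.mul_eq_add
  have key : ∀ s, 0 ≤ s → dualityMap p (dualityMap q s) = s := fun s hs => by
    rw [dualityMap_of_nonneg hpq.symm.lt hs, dualityMap_of_nonneg hpq.lt (by positivity),
      ← Real.rpow_mul hs, hexp, Real.rpow_one]
  rcases le_total 0 t with ht | ht
  · exact key t ht
  · simpa [dualityMap_neg] using key (-t) (neg_nonneg.2 ht)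

lemma hasDerivAt_abs_rpow_div {r : ℝ} (hr : 1 < r) (t : ℝ) :
    HasDerivAt (fun s => |s| ^ r / r) (dualityMap r t) t := by
  refine ((hasDerivAt_abs_rpow t hr).div_const r).congr_deriv ?_
  rw [dualityMap_eq_abs_rpow_mul]
  field_simp [(by linarith : r ≠ 0)]

lemma strictConvexOn_abs_rpow_div {r : ℝ} (hr : 1 < r) :
    StrictConvexOn ℝ univ (fun s => |s| ^ r / r) := by
  have hderiv : deriv (fun s => |s| ^ r / r) = dualityMap r :=
    funext fun s => (hasDerivAt_abs_rpow_div hr s).deriv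
  refine StrictMono.strictConvexOn_univ_of_deriv (Differentiable.continuous fun s =>
    (hasDerivAt_abs_rpow_div hr s).differentiableAt) ?_
  rw [hderiv]
  exact dualityMap_strictMono hr

lemma StrictConvexOn.add_mul_sub_lt {f : ℝ → ℝ} {f' a b : ℝ} (hf : StrictConvexOn ℝ univ f)
    (hb : HasDerivAt f f' b) (hab : a ≠ b) : f b + f' * (a - b) < f a := by
  rcases hab.lt_or_gt with hab | hab
  · have := hf.slope_lt_of_hasDerivAt trivial trivial hab hb
    rw [slope_def_field, div_lt_iff₀ (by linarith)] at this
    linarith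
  · have := hf.lt_slope_of_hasDerivAt trivial trivial hab hb
    rw [slope_def_field, lt_div_iff₀ (by linarith)] at this
    linarith

lemma abs_rpow_div_add_dualityMap_mul_sub_lt {r a b : ℝ} (hr : 1 < r) (hab : a ≠ b) :
    |b| ^ r / r + dualityMap r b * (a - b) < |a| ^ r / r :=
  (strictConvexOn_abs_rpow_div hr).add_mul_sub_lt (hasDerivAt_abs_rpow_div hr b) hab

section Objectives

variable {ι κ : Type*} [Fintype ι] [Fintype κ] (X : Matrix ι κ ℝ) (y : ι → ℝ)

noncomputable def primalObjective (p γ : ℝ) (w : κ → ℝ) : ℝ :=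
  γ / 2 * ∑ i, ((X *ᵥ w) i - y i) ^ 2 + 1 / p * ∑ j, |w j| ^ p

noncomputable def dualObjective (q γ : ℝ) (α : ι → ℝ) : ℝ :=
  1 / q * ∑ j, |(Xᵀ *ᵥ α) j| ^ q + 1 / (2 * γ) * ∑ i, α i ^ 2 - ∑ i, y i * α i

noncomputable def primalGradient (p γ : ℝ) (w : κ → ℝ) : κ → ℝ :=
  γ • (Xᵀ *ᵥ (X *ᵥ w - y)) + dualityMap p ∘ w

noncomputable def dualGradient (q γ : ℝ) (α : ι → ℝ) : ι → ℝ :=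
  X *ᵥ (dualityMap q ∘ (Xᵀ *ᵥ α)) - y + γ⁻¹ • α

lemma primalObjective_lt_of_primalGradient_eq_zero {p γ : ℝ} (hp : 1 < p) (hγ : 0 ≤ γ)
    {w₀ w : κ → ℝ} (hw₀ : primalGradient X y p γ w₀ = 0) (hw : w ≠ w₀) :
    primalObjective X y p γ w₀ < primalObjective X y p γ w := by
  set r := X *ᵥ w₀ - y
  set D := X *ᵥ (w - w₀)
  have hres : X *ᵥ w - y = r + D := by simp only [r, D, mulVec_sub]; abel
  have hcross : γ * (r ⬝ᵥ D) = -((dualityMap p ∘ w₀) ⬝ᵥ (w - w₀)) := by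
    rw [dotProduct_mulVec, ← mulVec_transpose, ← smul_eq_mul, ← smul_dotProduct,
      eq_neg_of_add_eq_zero_left hw₀, neg_dotProduct]
  set B : κ → ℝ := fun j => |w j| ^ p / p - |w₀ j| ^ p / p - dualityMap p (w₀ j) * (w j - w₀ j)
  have hB_nonneg : ∀ j, 0 ≤ B j := fun j => by
    rcases eq_or_ne (w j) (w₀ j) with h | h
    · simp [B, h]
    · linarith [abs_rpow_div_add_dualityMap_mul_sub_lt hp h]
  have hB_pos : 0 < ∑ j, B j := by
    obtain ⟨j, hj⟩ := Function.ne_iff.1 hw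
    refine Finset.sum_pos' (fun j _ => hB_nonneg j) ⟨j, Finset.mem_univ j, ?_⟩
    linarith [abs_rpow_div_add_dualityMap_mul_sub_lt hp hj]
  have hsplit : primalObjective X y p γ w =
      primalObjective X y p γ w₀ + γ / 2 * ∑ i, D i ^ 2 + ∑ j, B j := by
    have hsq : ∑ i, ((X *ᵥ w) i - y i) ^ 2 = ∑ i, r i ^ 2 + 2 * (r ⬝ᵥ D) + ∑ i, D i ^ 2 := by
      simp only [← Pi.sub_apply, hres, Pi.add_apply, add_sq, Finset.sum_add_distrib, dotProduct,
        Finset.mul_sum, mul_assoc]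
    have hB : ∑ j, B j = 1 / p * ∑ j, |w j| ^ p - 1 / p * ∑ j, |w₀ j| ^ p
        - (dualityMap p ∘ w₀) ⬝ᵥ (w - w₀) := by
      simp only [B, Finset.sum_sub_distrib, dotProduct, Finset.mul_sum, Function.comp_apply,
        Pi.sub_apply, one_div_mul_eq_div]
    rw [primalObjective, primalObjective, hsq, hB]
    linear_combination hcross
  rw [hsplit]
  have hD : 0 ≤ γ / 2 * ∑ i, D i ^ 2 := by positivity
  linarith

lemma hasDerivAt_dualObjective_line {q γ : ℝ} (hq : 1 < q) (α v : ι → ℝ) :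
    HasDerivAt (fun t : ℝ => dualObjective X y q γ (α + t • v))
      (dualGradient X y q γ α ⬝ᵥ v) 0 := by
  set u := Xᵀ *ᵥ α
  set c := Xᵀ *ᵥ v
  have hline : ∀ a b : ℝ, HasDerivAt (fun t : ℝ => a + t * b) b 0 := fun a b => by
    simpa using ((hasDerivAt_id (0 : ℝ)).mul_const b).const_add a
  have hφ : (fun t : ℝ => dualObjective X y q γ (α + t • v)) = fun t =>
      ∑ j, |u j + t * c j| ^ q / q + ∑ i, (α i + t * v i) ^ 2 / (2 * γ)
        - ∑ i, y i * (α i + t * v i) := by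
    funext t
    simp only [dualObjective, mulVec_add, mulVec_smul, Pi.add_apply, Pi.smul_apply, smul_eq_mul,
      Finset.mul_sum, u, c]
    congr 2 <;> refine Finset.sum_congr rfl fun _ _ => by ring
  have hderiv := ((HasDerivAt.fun_sum (u := Finset.univ) fun j _ =>
      (hasDerivAt_abs_rpow_div hq (u j)).comp_of_eq 0 (hline (u j) (c j)) (by simp)).add
    (HasDerivAt.fun_sum (u := Finset.univ) fun i _ =>
      ((hline (α i) (v i)).pow 2).div_const (2 * γ))).sub
    (HasDerivAt.fun_sum (u := Finset.univ) fun i _ => (hline (α i) (v i)).const_mul (y i))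
  rw [hφ]
  refine hderiv.congr_deriv ?_
  have hquad : ∑ i, (2 : ℕ) * (α i + 0 * v i) ^ (2 - 1) * v i / (2 * γ) = γ⁻¹ * (α ⬝ᵥ v) := by
    rw [dotProduct, Finset.mul_sum]
    exact Finset.sum_congr rfl fun i _ => by push_cast; ring
  have hlin : (X *ᵥ (dualityMap q ∘ u)) ⬝ᵥ v = (dualityMap q ∘ u) ⬝ᵥ c := by
    rw [dotProduct_comm, dotProduct_mulVec, ← mulVec_transpose, dotProduct_comm]
  rw [hquad, dualGradient, add_dotProduct, sub_dotProduct, smul_dotProduct, smul_eq_mul, hlin]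
  simp only [dotProduct, Function.comp_apply]
  ring

lemma dualGradient_eq_zero_of_isMin {q γ : ℝ} (hq : 1 < q) {α₀ : ι → ℝ}
    (hα₀ : ∀ α, dualObjective X y q γ α₀ ≤ dualObjective X y q γ α) :
    dualGradient X y q γ α₀ = 0 := by
  set g := dualGradient X y q γ α₀
  have hmin : IsLocalMin (fun t : ℝ => dualObjective X y q γ (α₀ + t • g)) 0 :=
    Filter.Eventually.of_forall fun t => by simpa using hα₀ (α₀ + t • g)
  exact dotProduct_self_eq_zero.1 <|
    hmin.hasDerivAt_eq_zero (hasDerivAt_dualObjective_line X y hq α₀ g)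

lemma primalGradient_dualityMap_eq_zero {p q γ : ℝ} (hpq : p.HolderConjugate q) (hγ : γ ≠ 0)
    {α₀ : ι → ℝ} (hα₀ : dualGradient X y q γ α₀ = 0) :
    primalGradient X y p γ (dualityMap q ∘ (Xᵀ *ᵥ α₀)) = 0 := by
  have hres : X *ᵥ (dualityMap q ∘ (Xᵀ *ᵥ α₀)) - y = -(γ⁻¹ • α₀) :=
    eq_neg_of_add_eq_zero_left hα₀
  have hinv : dualityMap p ∘ dualityMap q ∘ (Xᵀ *ᵥ α₀) = Xᵀ *ᵥ α₀ :=
    funext fun j => dualityMap_dualityMap hpq _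
  rw [primalGradient, hres, hinv, mulVec_neg, mulVec_smul, smul_neg, smul_smul,
    mul_inv_cancel₀ hγ, one_smul, neg_add_cancel]

end Objectives

theorem ellp_dual_to_primal_general (n d : ℕ) (p q γ : ℝ) (hp1 : 1 < p)
    (hpq : 1 / p + 1 / q = 1) (hγ : 0 < γ)
    (X : Matrix (Fin n) (Fin d) ℝ) (y : Fin n → ℝ)
    (F : (Fin d → ℝ) → ℝ)
    (hF : ∀ w, F w = γ / 2 * ∑ i, (X.mulVec w i - y i) ^ 2
        + 1 / p * ∑ j, |w j| ^ p)
    (Λ : (Fin n → ℝ) → ℝ)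
    (hΛ : ∀ α, Λ α = 1 / q * ∑ j, |X.transpose.mulVec α j| ^ q
        + 1 / (2 * γ) * ∑ i, α i ^ 2 - ∑ i, y i * α i)
    (J : (Fin d → ℝ) → Fin d → ℝ)
    (hJ : ∀ u j, J u j = Real.sign (u j) * |u j| ^ (q - 1))
    (ᾱ : Fin n → ℝ) (hᾱ : ∀ α, Λ ᾱ ≤ Λ α) :
    (∀ w, F (J (X.transpose.mulVec ᾱ)) ≤ F w) ∧
      ∀ w, (∀ v, F w ≤ F v) → w = J (X.transpose.mulVec ᾱ) := by
  have hpq' : p.HolderConjugate q :=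
    Real.holderConjugate_iff.2 ⟨hp1, by simpa only [one_div] using hpq⟩
  obtain rfl : F = primalObjective X y p γ := funext hF
  obtain rfl : Λ = dualObjective X y q γ := funext hΛ
  obtain rfl : J = fun u => dualityMap q ∘ u := funext₂ hJ
  have hlt : ∀ w, w ≠ dualityMap q ∘ (Xᵀ *ᵥ ᾱ) →
      primalObjective X y p γ (dualityMap q ∘ (Xᵀ *ᵥ ᾱ)) < primalObjective X y p γ w :=
    fun w => primalObjective_lt_of_primalGradient_eq_zero X y hp1 hγ.le <|
      primalGradient_dualityMap_eq_zero X y hpq' hγ.ne' <|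
        dualGradient_eq_zero_of_isMin X y hpq'.symm.lt hᾱ
  refine ⟨fun w => ?_, fun w hw => ?_⟩
  · rcases eq_or_ne w (dualityMap q ∘ (Xᵀ *ᵥ ᾱ)) with rfl | hne
    · exact le_rfl
    · exact (hlt w hne).le
  · by_contra hne
    exact (hlt w hne).not_ge (hw _)

/-- For `1 < p < 2` with conjugate exponent `q`, if `ᾱ` minimizes the
dual objective `Λ(α) = (1/q)‖Xᵀα‖_q^q + (1/(2γ))‖α‖₂² − ⟨y, α⟩`, then
`w̄ = J_q(Xᵀᾱ)` is the unique minimizer of the primal objective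
`F(w) = (γ/2)‖Xw − y‖₂² + (1/p)‖w‖_p^p`. -/
theorem ellp_dual_to_primal (n d : ℕ) (p q γ : ℝ) (hp1 : 1 < p) (hp2 : p < 2)
    (hpq : 1 / p + 1 / q = 1) (hγ : 0 < γ)
    (X : Matrix (Fin n) (Fin d) ℝ) (y : Fin n → ℝ)
    (F : (Fin d → ℝ) → ℝ)
    (hF : ∀ w, F w = γ / 2 * ∑ i, (X.mulVec w i - y i) ^ 2
        + 1 / p * ∑ j, |w j| ^ p)
    (Λ : (Fin n → ℝ) → ℝ)
    (hΛ : ∀ α, Λ α = 1 / q * ∑ j, |X.transpose.mulVec α j| ^ q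
        + 1 / (2 * γ) * ∑ i, α i ^ 2 - ∑ i, y i * α i)
    (J : (Fin d → ℝ) → Fin d → ℝ)
    (hJ : ∀ u j, J u j = Real.sign (u j) * |u j| ^ (q - 1))
    (ᾱ : Fin n → ℝ) (hᾱ : ∀ α, Λ ᾱ ≤ Λ α) :
    (∀ w, F (J (X.transpose.mulVec ᾱ)) ≤ F w) ∧
      ∀ w, (∀ v, F w ≤ F v) → w = J (X.transpose.mulVec ᾱ) :=
  ellp_dual_to_primal_general n d p q γ hp1 hpq hγ X y F hF Λ hΛ J hJ ᾱ hᾱ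
end
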